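/- Let G_1 and G_2 be finite simple connected graphs on disjoint vertex sets, let v_1 ∈ V(G_1) and v_2 ∈ V(G_2), and let G be the graph obtained from the disjoint union of G_1 and G_2 by adding the edge v_1v_2 (which is a bridge of G). Then cdim(G) = cdim(G_1) + cdim(G_2) + 1 if both G_1 and G_2 force a 𝟙 representation, and cdim(G) = cdim(G_1) + cdim(G_2) otherwise. -/

import Mathlib

open SimpleGraph

namespace ConnDim

open Classical in
/-- The local connectivity `κ(a,b)`: the maximum number of internally vertex-disjoint
`a`-`b` paths, with `κ(a,a) = ∞`. -/
noncomputable def localConn {V : Type*} (G : SimpleGraph V) (a b : V) : ℕ∞ :=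
  if a = b then ⊤
  else sSup {n : ℕ∞ | ∃ Ps : Finset (G.Path a b),
    (∀ p ∈ Ps, ∀ q ∈ Ps, p ≠ q → ∀ x : V,
        x ∈ p.1.support → x ∈ q.1.support → x = a ∨ x = b) ∧
    (Ps.card : ℕ∞) = n}

/-- A set `W` is connectivity resolving if vertices are determined by their
local connectivities to the elements of `W`. -/
def ConnResolving {V : Type*} (G : SimpleGraph V) (W : Set V) : Prop :=
  ∀ u v : V, (∀ w ∈ W, localConn G u w = localConn G v w) → u = v

/-- The connectivity dimension: minimum cardinality of a connectivity resolving set. -/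
noncomputable def cdim {V : Type*} (G : SimpleGraph V) : ℕ :=
  sInf {n : ℕ | ∃ W : Set V, ConnResolving G W ∧ W.ncard = n}

/-- A set `W` is metric resolving if vertices are determined by their distances
to the elements of `W`. -/
def MetricResolving {V : Type*} (G : SimpleGraph V) (W : Set V) : Prop :=
  ∀ u v : V, (∀ w ∈ W, G.dist u w = G.dist v w) → u = v

/-- The metric dimension: minimum cardinality of a metric resolving set. -/
noncomputable def mdim {V : Type*} (G : SimpleGraph V) : ℕ :=
  sInf {n : ℕ | ∃ W : Set V, MetricResolving G W ∧ W.ncard = n}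

/-- `G` forces a `𝟙` representation if every minimum resolving set (basis) `B` admits a
vertex whose local connectivity to every element of `B` equals `1`. -/
def ForcesOne {V : Type*} (G : SimpleGraph V) : Prop :=
  ∀ B : Set V, ConnResolving G B → B.ncard = cdim G →
    ∃ v : V, ∀ b ∈ B, localConn G v b = 1

/-- A cut vertex of a connected graph: its removal disconnects the graph. -/
def IsCutVertex {V : Type*} (G : SimpleGraph V) (v : V) : Prop :=
  G.Connected ∧ ¬ (G.induce {u : V | u ≠ v}).Connected

/-- A block of `G`: a maximal connected subgraph of `G` without a cut vertex of itself. -/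
def IsBlock {V : Type*} (G : SimpleGraph V) (H : G.Subgraph) : Prop :=
  H.coe.Connected ∧ (∀ v, ¬ IsCutVertex H.coe v) ∧
  ∀ H' : G.Subgraph, H ≤ H' → H'.coe.Connected → (∀ v, ¬ IsCutVertex H'.coe v) → H' = H

/-- The number of blocks of `G`. -/
noncomputable def numBlocks {V : Type*} (G : SimpleGraph V) : ℕ :=
  Nat.card {H : G.Subgraph // IsBlock G H}

/-- Two vertices are twins if they have the same neighborhood in the graph with
both of them deleted. -/
def AreTwins {V : Type*} (G : SimpleGraph V) (a b : V) : Prop :=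
  ∀ x : V, x ≠ a → x ≠ b → (G.Adj a x ↔ G.Adj b x)

/-- The threshold graph generated by a binary sequence `L` (`false` = isolated vertex,
`true` = dominating vertex): two vertices are adjacent iff the later one was added
as a dominating vertex. -/
def thresholdGraph (L : List Bool) : SimpleGraph (Fin L.length) :=
  SimpleGraph.fromRel (fun i j => i < j ∧ L.get j = true)

/-- The alternating binary sequence `0,1,0,1,…,0,1` of length `2 * n`. -/
def altList (n : ℕ) : List Bool := (List.replicate n [false, true]).flatten

/-- The join of two graphs on disjoint vertex sets by the bridge `v₁v₂`. -/
def bridgeJoin {V₁ V₂ : Type*} (G₁ : SimpleGraph V₁) (G₂ : SimpleGraph V₂)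
    (v₁ : V₁) (v₂ : V₂) : SimpleGraph (V₁ ⊕ V₂) :=
  G₁.map Function.Embedding.inl ⊔ G₂.map Function.Embedding.inr
    ⊔ SimpleGraph.fromEdgeSet {s(Sum.inl v₁, Sum.inr v₂)}

/-- The graph obtained from `G` by attaching a new leaf (the vertex `none`) to `u`. -/
def attachLeaf {V : Type*} (G : SimpleGraph V) (u : V) : SimpleGraph (Option V) :=
  G.map Function.Embedding.some ⊔ SimpleGraph.fromEdgeSet {s(some u, (none : Option V))}

/-- The chain of `t` triangles (triangle `i` has vertices `inl i.castSucc`, `inl i.succ`,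
`inr (inl i)`), with a leaf `inr (inr ())` attached to the end vertex `inl 0`. -/
def triChain (t : ℕ) : SimpleGraph (Fin (t+1) ⊕ Fin t ⊕ Unit) :=
  SimpleGraph.fromRel (fun a b =>
    match a, b with
    | Sum.inl i, Sum.inl j => (i : ℕ) + 1 = (j : ℕ)
    | Sum.inr (Sum.inl i), Sum.inl j => j = Fin.castSucc i ∨ j = Fin.succ i
    | Sum.inr (Sum.inr _), Sum.inl j => j = 0
    | _, _ => False)

/-!
The bridge `v₁v₂` separates the two sides. A path between two vertices of `Gᵢ` would have to
cross it twice to leave `Gᵢ`, so local connectivities inside each side are those of `Gᵢ`;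
and every path from `G₁` to `G₂` passes through `v₁` and `v₂`, so a vertex of `G₁` and a
vertex of `G₂` have local connectivity exactly `1`. Hence `W` resolves `G` iff its traces
resolve `G₁` and `G₂` and the two sides do not both contain a vertex with representation `𝟙`
(two such vertices would have the same representation in `G`). Two bases therefore combine
to a resolving set of `G` unless both sides force a `𝟙` representation; then one extra
vertex is needed, and adding the `𝟙`-represented vertex of one side to its basis suffices.
-/

section LocalConn

variable {V W : Type*} {G : SimpleGraph V} {G' : SimpleGraph W} {a b : V}

def InternallyDisjoint (Ps : Finset (G.Path a b)) : Prop :=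
  ∀ p ∈ Ps, ∀ q ∈ Ps, p ≠ q → ∀ x : V,
    x ∈ p.1.support → x ∈ q.1.support → x = a ∨ x = b

lemma localConn_self (a : V) : localConn G a a = ⊤ := if_pos rfl

lemma localConn_of_ne (hab : a ≠ b) : localConn G a b =
    sSup {n : ℕ∞ | ∃ Ps : Finset (G.Path a b), InternallyDisjoint Ps ∧ (Ps.card : ℕ∞) = n} :=
  if_neg hab

lemma localConn_ne_top [Finite V] (hab : a ≠ b) : localConn G a b ≠ ⊤ := by
  classical
  have := Fintype.ofFinite V
  have hle : localConn G a b ≤ Fintype.card (G.Path a b) := by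
    rw [localConn_of_ne hab]
    refine sSup_le ?_
    rintro _ ⟨Ps, -, rfl⟩
    exact_mod_cast Ps.card_le_univ
  exact ne_top_of_le_ne_top (ENat.natCast_ne_top _) hle

lemma localConn_eq_top_iff [Finite V] : localConn G a b = ⊤ ↔ a = b :=
  ⟨fun h => by_contra fun hab => localConn_ne_top hab h, fun h => h ▸ localConn_self a⟩

lemma one_le_localConn (hab : a ≠ b) (hr : G.Reachable a b) : 1 ≤ localConn G a b := by
  classical
  obtain ⟨p⟩ := hr
  rw [localConn_of_ne hab]
  refine le_sSup ⟨{p.toPath}, ?_, by simp⟩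
  simp only [InternallyDisjoint, Finset.mem_singleton]
  rintro p rfl q rfl hpq
  exact absurd rfl hpq

lemma localConn_le_one (hab : a ≠ b)
    (h : ∀ p q : G.Path a b, p ≠ q → ∃ x ∈ p.1.support, x ∈ q.1.support ∧ x ≠ a ∧ x ≠ b) :
    localConn G a b ≤ 1 := by
  rw [localConn_of_ne hab]
  refine sSup_le ?_
  rintro _ ⟨Ps, hPs, rfl⟩
  suffices Ps.card ≤ 1 by exact_mod_cast this
  refine Finset.card_le_one.mpr fun p hp q hq => by_contra fun hpq => ?_
  obtain ⟨x, hxp, hxq, hxa, hxb⟩ := h p q hpq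
  exact (hPs p hp q hq hpq x hxp hxq).elim hxa hxb

lemma localConn_congr (f : V → W) (hf : Function.Injective f)
    (e : G.Path a b ≃ G'.Path (f a) (f b))
    (he : ∀ p, (e p).1.support = p.1.support.map f) :
    localConn G' (f a) (f b) = localConn G a b := by
  rcases eq_or_ne a b with rfl | hab
  · rw [localConn_self, localConn_self]
  rw [localConn_of_ne hab, localConn_of_ne (hf.ne hab)]
  have mem_support_e (p : G.Path a b) (x : V) : f x ∈ (e p).1.support ↔ x ∈ p.1.support := by
    rw [he, List.mem_map_of_injective hf]
  congr 1
  ext n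
  constructor
  · rintro ⟨Ps, hPs, rfl⟩
    refine ⟨Ps.map e.symm.toEmbedding, ?_, by simp⟩
    simp only [InternallyDisjoint, Finset.mem_map_equiv, Equiv.symm_symm]
    intro p hp q hq hpq x hxp hxq
    rw [← mem_support_e] at hxp hxq
    exact (hPs _ hp _ hq (e.injective.ne hpq) _ hxp hxq).imp hf.eq_iff.mp hf.eq_iff.mp
  · rintro ⟨Ps, hPs, rfl⟩
    refine ⟨Ps.map e.toEmbedding, ?_, by simp⟩
    simp only [InternallyDisjoint, Finset.mem_map_equiv]
    intro p hp q hq hpq y hyp hyq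
    rw [← e.apply_symm_apply p, he, List.mem_map] at hyp
    obtain ⟨x, hxp, rfl⟩ := hyp
    rw [← e.apply_symm_apply q, mem_support_e] at hyq
    exact (hPs _ hp _ hq (e.symm.injective.ne hpq) x hxp hyq).imp (congrArg f) (congrArg f)

lemma Walk.exists_support_eq_map (f : G ↪g G') {x y : W} (q : G'.Walk x y) :
    (∀ z ∈ q.support, z ∈ Set.range f) → ∀ {a b : V}, f a = x → f b = y →
      ∃ p : G.Walk a b, q.support = p.support.map f := by
  induction q with
  | nil =>
    rintro - a b rfl hb
    obtain rfl : a = b := f.injective hb.symm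
    exact ⟨.nil, rfl⟩
  | cons hxz q ih =>
    rintro hq a b rfl hb
    obtain ⟨c, rfl⟩ := hq _ (List.mem_cons_of_mem _ q.start_mem_support)
    obtain ⟨p, hp⟩ := ih (fun z hz => hq z (List.mem_cons_of_mem _ hz)) rfl hb
    exact ⟨.cons (f.map_adj_iff.mp hxz) p, by simp [hp]⟩

lemma localConn_map_embedding (f : G ↪g G')
    (h : ∀ q : G'.Path (f a) (f b), ∀ z ∈ q.1.support, z ∈ Set.range f) :
    localConn G' (f a) (f b) = localConn G a b := by
  have hsurj : Function.Surjective (Path.mapEmbedding f : G.Path a b → _) := fun q => by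
    obtain ⟨p, hp⟩ := Walk.exists_support_eq_map f q.1 (h q) rfl rfl
    have hpq : p.map f.toHom = q.1 := Walk.ext_support (by simpa using hp.symm)
    exact ⟨⟨p, (Walk.isPath_map_iff_of_injective f.injective).mp (hpq ▸ q.2)⟩,
      Subtype.ext hpq⟩
  exact localConn_congr f f.injective
    (Equiv.ofBijective _ ⟨Path.mapEmbedding_injective f a b, hsurj⟩)
    (fun p => Walk.support_map _ _)

lemma localConn_iso (e : G ≃g G') (a b : V) : localConn G' (e a) (e b) = localConn G a b :=
  localConn_map_embedding e.toEmbedding fun _ z _ => ⟨e.symm z, e.apply_symm_apply z⟩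

end LocalConn

section Resolving

variable {V : Type*} {G : SimpleGraph V} {W : Set V}

def HasOneRepresentation (G : SimpleGraph V) (W : Set V) : Prop :=
  ∃ v, ∀ w ∈ W, localConn G v w = 1

lemma connResolving_univ [Finite V] : ConnResolving G Set.univ := fun _ v huv =>
  localConn_eq_top_iff.mp ((huv v trivial).trans (localConn_self v))

lemma exists_basis [Finite V] (G : SimpleGraph V) :
    ∃ B : Set V, ConnResolving G B ∧ B.ncard = cdim G := by
  have hne : {n | ∃ W : Set V, ConnResolving G W ∧ W.ncard = n}.Nonempty :=
    ⟨_, Set.univ, connResolving_univ, rfl⟩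
  exact Nat.sInf_mem hne

lemma cdim_le_ncard (hW : ConnResolving G W) : cdim G ≤ W.ncard :=
  Nat.sInf_le ⟨W, hW, rfl⟩

/-- Take `insert v W` for a `𝟙`-represented vertex `v`: a `𝟙`-represented vertex of it would
share `v`'s representation on `W`, hence be `v`, but `κ(v,v) = ∞`. -/
lemma exists_connResolving_not_hasOneRepresentation [Finite V] (hW : ConnResolving G W) :
    ∃ W', ConnResolving G W' ∧ W'.ncard ≤ W.ncard + 1 ∧ ¬ HasOneRepresentation G W' := by
  by_cases hone : HasOneRepresentation G W
  swap
  · exact ⟨W, hW, by omega, hone⟩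
  obtain ⟨v, hv⟩ := hone
  refine ⟨insert v W, fun x y hxy => hW x y fun w hw => hxy w (.inr hw),
    Set.ncard_insert_le v W, ?_⟩
  rintro ⟨u, hu⟩
  obtain rfl : u = v := hW u v fun w hw => (hu w (.inr hw)).trans (hv w hw).symm
  simpa [localConn_self] using hu u (.inl rfl)

end Resolving

lemma ncard_eq_ncard_preimage_inl_add_ncard_preimage_inr {α β : Type*} [Finite α] [Finite β]
    (W : Set (α ⊕ β)) : W.ncard = (Sum.inl ⁻¹' W).ncard + (Sum.inr ⁻¹' W).ncard := by
  nth_rw 1 [← Set.image_preimage_inl_union_image_preimage_inr W]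
  rw [Set.ncard_union_eq Set.disjoint_image_inl_image_inr,
    Set.ncard_image_of_injective _ Sum.inl_injective,
    Set.ncard_image_of_injective _ Sum.inr_injective]

section BridgeJoin

open Sum

variable {V₁ V₂ : Type*} {G₁ : SimpleGraph V₁} {G₂ : SimpleGraph V₂} {v₁ : V₁} {v₂ : V₂}

local notation "G" => bridgeJoin G₁ G₂ v₁ v₂

@[simp] lemma bridgeJoin_adj_inl_inl {a b : V₁} : (G).Adj (inl a) (inl b) ↔ G₁.Adj a b := by
  simp [bridgeJoin]

@[simp] lemma bridgeJoin_adj_inr_inr {a b : V₂} : (G).Adj (inr a) (inr b) ↔ G₂.Adj a b := by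
  simp [bridgeJoin]

@[simp] lemma bridgeJoin_adj_inl_inr {a : V₁} {b : V₂} :
    (G).Adj (inl a) (inr b) ↔ a = v₁ ∧ b = v₂ := by
  simp [bridgeJoin, and_comm]

@[simp] lemma bridgeJoin_adj_inr_inl {a : V₂} {b : V₁} :
    (G).Adj (inr a) (inl b) ↔ a = v₂ ∧ b = v₁ := by
  rw [SimpleGraph.adj_comm, bridgeJoin_adj_inl_inr, and_comm]

def bridgeJoinInl : G₁ ↪g G where
  toEmbedding := .inl
  map_rel_iff' := bridgeJoin_adj_inl_inl

def bridgeJoinSwap : G ≃g bridgeJoin G₂ G₁ v₂ v₁ where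
  toEquiv := Equiv.sumComm V₁ V₂
  map_rel_iff' := by rintro (a | a) (b | b) <;> simp [and_comm]

lemma bridge_mem_edges {a : V₁} {b : V₂} (p : (G).Walk (inl a) (inr b)) :
    s(inl v₁, inr v₂) ∈ p.edges := by
  obtain ⟨⟨⟨x, y⟩, hxy⟩, hd, ⟨c, rfl⟩, hy⟩ :=
    p.exists_boundary_dart (Set.range inl) ⟨a, rfl⟩ (by simp)
  rcases y with c' | d
  · exact absurd ⟨c', rfl⟩ hy
  obtain ⟨rfl, rfl⟩ := bridgeJoin_adj_inl_inr.mp hxy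
  exact List.mem_map_of_mem (f := Dart.edge) hd

lemma support_subset_range_inl {a b : V₁} (p : (G).Walk (inl a) (inl b)) (hp : p.IsTrail) :
    ∀ z ∈ p.support, z ∈ Set.range inl := by
  classical
  rintro (c | c) hz
  · exact ⟨c, rfl⟩
  have hback : s(inl v₁, inr v₂) ∈ (p.dropUntil _ hz).edges := by
    simpa using bridge_mem_edges (p.dropUntil _ hz).reverse
  exact absurd hback (hp.disjoint_edges_takeUntil_dropUntil hz (bridge_mem_edges _))

lemma localConn_inl_inl (a b : V₁) : localConn G (inl a) (inl b) = localConn G₁ a b :=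
  localConn_map_embedding bridgeJoinInl fun q => support_subset_range_inl q.1 q.2.isTrail

lemma localConn_inr_inr (a b : V₂) : localConn G (inr a) (inr b) = localConn G₂ a b := by
  rw [← localConn_iso bridgeJoinSwap]
  exact localConn_inl_inl a b

lemma subsingleton_path_bridge : Subsingleton ((G).Path (inl v₁) (inr v₂)) := by
  refine ⟨fun p q => Subtype.ext ?_⟩
  suffices ∀ p : (G).Walk (inl v₁) (inr v₂), p.IsPath → p = .cons (by simp) .nil by
    rw [this p.1 p.2, this q.1 q.2]
  intro p hp
  obtain ⟨z, h, p', rfl⟩ := Walk.exists_eq_cons_of_ne (by simp) p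
  rcases z with c | c
  · exact absurd (p'.fst_mem_support_of_mem_edges (bridge_mem_edges p'))
      ((Walk.cons_isPath_iff h p').mp hp).2
  · obtain ⟨-, rfl⟩ := bridgeJoin_adj_inl_inr.mp h
    rw [(Walk.isPath_iff_nil.mp hp.of_cons).eq_nil]

lemma reachable_inl_inr (h₁ : G₁.Connected) (h₂ : G₂.Connected) (a : V₁) (b : V₂) :
    (G).Reachable (inl a) (inr b) :=
  ((h₁.preconnected a v₁).map bridgeJoinInl.toHom).trans <|
    (bridgeJoin_adj_inl_inr.mpr ⟨rfl, rfl⟩ : (G).Adj (inl v₁) (inr v₂)).reachable.trans <|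
      ((h₂.preconnected v₂ b).map bridgeJoinInl.toHom).map bridgeJoinSwap.symm.toHom

lemma localConn_inl_inr (h₁ : G₁.Connected) (h₂ : G₂.Connected) (a : V₁) (b : V₂) :
    localConn G (inl a) (inr b) = 1 := by
  refine le_antisymm (localConn_le_one inl_ne_inr fun p q hpq => ?_)
    (one_le_localConn inl_ne_inr (reachable_inl_inr h₁ h₂ a b))
  have hp := bridge_mem_edges p.1
  have hq := bridge_mem_edges q.1
  by_cases ha : a = v₁
  · by_cases hb : b = v₂
    · subst ha hb
      exact absurd (subsingleton_path_bridge.elim p q) hpq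
    · exact ⟨_, p.1.snd_mem_support_of_mem_edges hp, q.1.snd_mem_support_of_mem_edges hq,
        inr_ne_inl, fun h => hb (inr_injective h).symm⟩
  · exact ⟨_, p.1.fst_mem_support_of_mem_edges hp, q.1.fst_mem_support_of_mem_edges hq,
      fun h => ha (inl_injective h).symm, inl_ne_inr⟩

lemma localConn_inr_inl (h₁ : G₁.Connected) (h₂ : G₂.Connected) (a : V₂) (b : V₁) :
    localConn G (inr a) (inl b) = 1 := by
  rw [← localConn_iso bridgeJoinSwap]
  exact localConn_inl_inr h₂ h₁ a b

lemma connResolving_bridgeJoin_iff (h₁ : G₁.Connected) (h₂ : G₂.Connected)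
    (W : Set (V₁ ⊕ V₂)) :
    ConnResolving G W ↔ ConnResolving G₁ (inl ⁻¹' W) ∧ ConnResolving G₂ (inr ⁻¹' W) ∧
      ¬ (HasOneRepresentation G₁ (inl ⁻¹' W) ∧ HasOneRepresentation G₂ (inr ⁻¹' W)) := by
  simp only [ConnResolving, HasOneRepresentation, Sum.forall, Set.mem_preimage,
    localConn_inl_inl, localConn_inr_inr, localConn_inl_inr h₁ h₂, localConn_inr_inl h₁ h₂,
    eq_comm (a := (1 : ℕ∞)), implies_true, and_true, true_and, inl.injEq, inr.injEq,
    reduceCtorEq, imp_false, forall_and, not_and, not_exists]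
  constructor
  · rintro ⟨⟨r₁, -⟩, sep, r₂⟩
    exact ⟨r₁, r₂, fun ⟨a, ha⟩ b hb => sep a b ha hb⟩
  · rintro ⟨r₁, r₂, sep⟩
    exact ⟨⟨r₁, fun b a ha hb => sep ⟨a, ha⟩ b hb⟩, fun a b ha hb => sep ⟨a, ha⟩ b hb, r₂⟩

lemma cdim_add_cdim_le_ncard [Finite V₁] [Finite V₂] (h₁ : G₁.Connected) (h₂ : G₂.Connected)
    {W : Set (V₁ ⊕ V₂)} (hW : ConnResolving G W) :
    cdim G₁ + cdim G₂ ≤ W.ncard := by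
  obtain ⟨r₁, r₂, -⟩ := (connResolving_bridgeJoin_iff h₁ h₂ W).mp hW
  rw [ncard_eq_ncard_preimage_inl_add_ncard_preimage_inr W]
  exact add_le_add (cdim_le_ncard r₁) (cdim_le_ncard r₂)

lemma cdim_add_cdim_lt_ncard [Finite V₁] [Finite V₂] (h₁ : G₁.Connected) (h₂ : G₂.Connected)
    (F₁ : ForcesOne G₁) (F₂ : ForcesOne G₂)
    {W : Set (V₁ ⊕ V₂)} (hW : ConnResolving G W) : cdim G₁ + cdim G₂ < W.ncard := by
  obtain ⟨r₁, r₂, hsep⟩ := (connResolving_bridgeJoin_iff h₁ h₂ W).mp hW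
  have hle₁ := cdim_le_ncard r₁
  have hle₂ := cdim_le_ncard r₂
  rw [ncard_eq_ncard_preimage_inl_add_ncard_preimage_inr W]
  by_contra! hle
  exact hsep ⟨F₁ _ r₁ (by omega), F₂ _ r₂ (by omega)⟩

lemma cdim_bridgeJoin_le [Finite V₁] [Finite V₂] (h₁ : G₁.Connected) (h₂ : G₂.Connected)
    {B₁ : Set V₁} {B₂ : Set V₂}
    (r₁ : ConnResolving G₁ B₁) (r₂ : ConnResolving G₂ B₂)
    (hsep : ¬ (HasOneRepresentation G₁ B₁ ∧ HasOneRepresentation G₂ B₂)) :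
    cdim G ≤ B₁.ncard + B₂.ncard := by
  have hB₁ : inl ⁻¹' (inl '' B₁ ∪ inr '' B₂) = B₁ := by
    simp [Set.preimage_image_eq _ inl_injective]
  have hB₂ : inr ⁻¹' (inl '' B₁ ∪ inr '' B₂) = B₂ := by
    simp [Set.preimage_image_eq _ inr_injective]
  have hB : ConnResolving G (inl '' B₁ ∪ inr '' B₂) := by
    rw [connResolving_bridgeJoin_iff h₁ h₂, hB₁, hB₂]
    exact ⟨r₁, r₂, hsep⟩
  simpa [ncard_eq_ncard_preimage_inl_add_ncard_preimage_inr, hB₁, hB₂] using cdim_le_ncard hB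

lemma cdim_bridgeJoin_le_add_one [Finite V₁] [Finite V₂] (h₁ : G₁.Connected)
    (h₂ : G₂.Connected) : cdim G ≤ cdim G₁ + cdim G₂ + 1 := by
  obtain ⟨B₁, r₁, hB₁⟩ := exists_basis G₁
  obtain ⟨B₂, r₂, hB₂⟩ := exists_basis G₂
  obtain ⟨B₁', r₁', hB₁', hsep⟩ := exists_connResolving_not_hasOneRepresentation r₁
  have := cdim_bridgeJoin_le h₁ h₂ (v₁ := v₁) (v₂ := v₂) r₁' r₂ (hsep ·.1)
  omega

lemma cdim_bridgeJoin_le_of_not_forcesOne [Finite V₁] [Finite V₂] (h₁ : G₁.Connected)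
    (h₂ : G₂.Connected) (hF : ¬ (ForcesOne G₁ ∧ ForcesOne G₂)) :
    cdim G ≤ cdim G₁ + cdim G₂ := by
  simp only [ForcesOne, not_and_or, not_forall] at hF
  rcases hF with ⟨B₁, r₁, hB₁, hsep⟩ | ⟨B₂, r₂, hB₂, hsep⟩
  · obtain ⟨B₂, r₂, hB₂⟩ := exists_basis G₂
    simpa [hB₁, hB₂] using cdim_bridgeJoin_le h₁ h₂ r₁ r₂ (hsep ·.1)
  · obtain ⟨B₁, r₁, hB₁⟩ := exists_basis G₁
    simpa [hB₁, hB₂] using cdim_bridgeJoin_le h₁ h₂ r₁ r₂ (hsep ·.2)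

end BridgeJoin

/-- joining two connected graphs by a bridge `v₁v₂` gives
`cdim G = cdim G₁ + cdim G₂ + 1` if both force a `𝟙` representation, and
`cdim G = cdim G₁ + cdim G₂` otherwise. -/
theorem stmt14 {V₁ V₂ : Type*} [Fintype V₁] [Fintype V₂]
    (G₁ : SimpleGraph V₁) (G₂ : SimpleGraph V₂)
    (h₁ : G₁.Connected) (h₂ : G₂.Connected) (v₁ : V₁) (v₂ : V₂) :
    (ForcesOne G₁ ∧ ForcesOne G₂ →
      cdim (bridgeJoin G₁ G₂ v₁ v₂) = cdim G₁ + cdim G₂ + 1) ∧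
    (¬ (ForcesOne G₁ ∧ ForcesOne G₂) →
      cdim (bridgeJoin G₁ G₂ v₁ v₂) = cdim G₁ + cdim G₂) := by
  obtain ⟨B, hB, hBcard⟩ := exists_basis (bridgeJoin G₁ G₂ v₁ v₂)
  refine ⟨fun ⟨F₁, F₂⟩ => ?_, fun hF => ?_⟩
  · have := cdim_bridgeJoin_le_add_one h₁ h₂ (v₁ := v₁) (v₂ := v₂)
    have := cdim_add_cdim_lt_ncard h₁ h₂ F₁ F₂ hB
    omega
  · have := cdim_bridgeJoin_le_of_not_forcesOne h₁ h₂ (v₁ := v₁) (v₂ := v₂) hF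
    have := cdim_add_cdim_le_ncard h₁ h₂ hB
    omega

end ConnDim
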